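/- Uniform truncated Taylor estimate for the q-th power integral: let q > 2. There exists a constant C > 0, depending only on q, such that for every measure space (X,μ), every δ ∈ (0,1], and every real-valued measurable φ ∈ L²(μ) ∩ L^q(μ), the function |1+φ|^q − 1 − qφ − (q(q−1)/2)φ² is integrable and | ∫ ( |1+φ|^q − 1 − qφ − (q(q−1)/2)φ² ) dμ | ≤ C ( δ ‖φ‖_{L²}² + δ^{2−q} ‖φ‖_{L^q}^q ). -/

import Mathlib

/-!
Write `R(t) = |1+t|^q - 1 - qt - q(q-1)/2 t²`. On `|t| ≤ 1/2` the third derivative of `R` is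
bounded while `R` and its first two derivatives vanish at `0`, so three mean value inequalities give
`|R(t)| ≲ |t|³`; for `|t| ≥ 1/2` every term of `R` is `≲ |t|^q`. Splitting at `|t| = δ` shows
`|t|³ ≤ δ t² + δ^{2-q} |t|^q` for `|t| ≤ 1`, so `|R(t)| ≲ δ t² + δ^{2-q} |t|^q` for all `t`,
and this pointwise bound integrates to the estimate.
-/

open MeasureTheory Set Real

noncomputable def powTaylorRemainder (q t : ℝ) : ℝ :=
  |1 + t| ^ q - 1 - q * t - q * (q - 1) / 2 * t ^ 2

theorem abs_le_mul_abs_pow_succ_of_abs_deriv_le {f f' : ℝ → ℝ} {a K : ℝ} {n : ℕ} (hK : 0 ≤ K)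
    (hf : ∀ x, |x| ≤ a → HasDerivAt f (f' x) x) (hf' : ∀ x, |x| ≤ a → |f' x| ≤ K * |x| ^ n)
    (h0 : f 0 = 0) : ∀ t, |t| ≤ a → |f t| ≤ K * |t| ^ (n + 1) := by
  intro t ht
  have hle : ∀ x ∈ uIcc 0 t, |x| ≤ |t| := fun x hx => by
    simpa using abs_sub_left_of_mem_uIcc hx
  have hmvt := (convex_uIcc 0 t).norm_image_sub_le_of_norm_hasDerivWithin_le (C := K * |t| ^ n)
    (fun x hx => (hf x ((hle x hx).trans ht)).hasDerivWithinAt)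
    (fun x hx => (hf' x ((hle x hx).trans ht)).trans
      (mul_le_mul_of_nonneg_left (pow_le_pow_left₀ (abs_nonneg _) (hle x hx) n) hK))
    left_mem_uIcc right_mem_uIcc
  simpa [h0, pow_succ, mul_assoc] using hmvt

theorem hasDerivAt_one_add_rpow {p x : ℝ} (hx : 0 < 1 + x) :
    HasDerivAt (fun u => (1 + u) ^ p) (p * (1 + x) ^ (p - 1)) x := by
  simpa using ((hasDerivAt_id x).const_add 1).rpow_const (p := p) (Or.inl hx.ne')

theorem exists_abs_powTaylorRemainder_le_mul_abs_pow_three (q : ℝ) :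
    ∃ L, 0 ≤ L ∧ ∀ t, |t| ≤ 1 / 2 → |powTaylorRemainder q t| ≤ L * |t| ^ 3 := by
  have hpos : ∀ x : ℝ, |x| ≤ 1 / 2 → 0 < 1 + x := fun x hx => by
    linarith [neg_abs_le x]
  obtain ⟨L, hL⟩ := (isCompact_closedBall (0 : ℝ) (1 / 2)).exists_bound_of_continuousOn
    (f := fun x => q * (q - 1) * (q - 2) * (1 + x) ^ (q - 3)) <| by
      refine ContinuousOn.mul continuousOn_const (ContinuousOn.rpow_const (by fun_prop) ?_)
      intro x hx
      exact Or.inl (hpos x (by simpa using hx)).ne'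
  replace hL : ∀ x : ℝ, |x| ≤ 1 / 2 → |q * (q - 1) * (q - 2) * (1 + x) ^ (q - 3)| ≤ L * |x| ^ 0 :=
    fun x hx => by simpa using hL x (by simpa using hx)
  have hL0 : 0 ≤ L := by simpa using (abs_nonneg _).trans (hL 0 (by norm_num))
  have hsecond := abs_le_mul_abs_pow_succ_of_abs_deriv_le hL0
    (f := fun u => q * (q - 1) * ((1 + u) ^ (q - 2) - 1))
    (fun x hx => (((hasDerivAt_one_add_rpow (hpos x hx)).sub_const 1).const_mul
      (q * (q - 1))).congr_deriv (by rw [show q - 2 - 1 = q - 3 by ring]; ring)) hL (by simp)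
  have hfirst := abs_le_mul_abs_pow_succ_of_abs_deriv_le hL0
    (f := fun u => q * ((1 + u) ^ (q - 1) - 1 - (q - 1) * u))
    (fun x hx => ((((hasDerivAt_one_add_rpow (hpos x hx)).sub_const 1).sub
      ((hasDerivAt_id x).const_mul (q - 1))).const_mul q).congr_deriv
      (by rw [show q - 1 - 1 = q - 2 by ring]; simp only [mul_one]; ring)) hsecond (by simp)
  have hcubic := abs_le_mul_abs_pow_succ_of_abs_deriv_le hL0
    (f := fun u => (1 + u) ^ q - 1 - q * u - q * (q - 1) / 2 * u ^ 2)
    (fun x hx => ((((hasDerivAt_one_add_rpow (hpos x hx)).sub_const 1).sub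
      ((hasDerivAt_id x).const_mul q)).sub
      ((hasDerivAt_pow 2 x).const_mul (q * (q - 1) / 2))).congr_deriv
      (by simp only [mul_one, Nat.cast_ofNat, Nat.add_one_sub_one, pow_one]; ring)) hfirst (by simp)
  refine ⟨L, hL0, fun t ht => ?_⟩
  simpa [powTaylorRemainder, abs_of_pos (hpos t ht)] using hcubic t ht

theorem abs_powTaylorRemainder_le_of_half_le_abs {q t : ℝ} (hq : 2 ≤ q) (ht : 1 / 2 ≤ |t|) :
    |powTaylorRemainder q t| ≤ (2 ^ q + 1 + q + q * (q - 1) / 2) * 2 ^ q * |t| ^ q := by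
  set s := 2 * |t|
  have hs : 1 ≤ s := by linarith
  have hsq : (2 : ℝ) ^ q * |t| ^ q = s ^ q := (mul_rpow (by norm_num) (abs_nonneg t)).symm
  have hpow : |1 + t| ^ q ≤ 2 ^ q * s ^ q := by
    rw [← mul_rpow (by norm_num) (by positivity)]
    refine rpow_le_rpow (abs_nonneg _) ?_ (by linarith)
    linarith [abs_add_le 1 t, abs_one (α := ℝ)]
  have hone : 1 ≤ s ^ q := one_le_rpow hs (by linarith)
  have hlin : q * |t| ≤ q * s ^ q :=
    mul_le_mul_of_nonneg_left (by linarith [self_le_rpow_of_one_le hs (by linarith : 1 ≤ q)])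
      (by linarith)
  have hsq_le : t ^ 2 ≤ s ^ q := by
    calc t ^ 2 ≤ s ^ (2 : ℝ) := by
          rw [rpow_two, ← sq_abs]; exact pow_le_pow_left₀ (abs_nonneg t) (by linarith) 2
      _ ≤ s ^ q := rpow_le_rpow_of_exponent_le hs hq
  have hquad : q * (q - 1) / 2 * t ^ 2 ≤ q * (q - 1) / 2 * s ^ q :=
    mul_le_mul_of_nonneg_left hsq_le (by nlinarith)
  have hqt : |q * t| = q * |t| := by rw [abs_mul, abs_of_nonneg (by linarith)]
  have htri : |powTaylorRemainder q t| ≤ |1 + t| ^ q + 1 + q * |t| + q * (q - 1) / 2 * t ^ 2 := by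
    have hpow_nonneg : 0 ≤ |1 + t| ^ q := by positivity
    have hquad_nonneg : 0 ≤ q * (q - 1) / 2 * t ^ 2 := mul_nonneg (by nlinarith) (sq_nonneg t)
    rw [abs_le]; unfold powTaylorRemainder
    constructor <;> linarith [neg_abs_le (q * t), le_abs_self (q * t)]
  calc |powTaylorRemainder q t| ≤ (2 ^ q + 1 + q + q * (q - 1) / 2) * s ^ q := by
        linarith
    _ = (2 ^ q + 1 + q + q * (q - 1) / 2) * 2 ^ q * |t| ^ q := by rw [← hsq]; ring

theorem abs_pow_three_le_mul_sq_add_rpow {q δ t : ℝ} (hq : 2 ≤ q) (hδ : 0 < δ) (ht : |t| ≤ 1) :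
    |t| ^ 3 ≤ δ * t ^ 2 + δ ^ (2 - q) * |t| ^ q := by
  rcases le_or_gt |t| δ with htδ | hδt
  · have : |t| ^ 3 ≤ δ * t ^ 2 := by
      rw [pow_succ', ← sq_abs t]; exact mul_le_mul_of_nonneg_right htδ (by positivity)
    have : 0 ≤ δ ^ (2 - q) * |t| ^ q := by positivity
    linarith
  · have htpos : 0 < |t| := hδ.trans hδt
    have hsplit : |t| ^ 3 = |t| * (|t| ^ (2 - q) * |t| ^ q) := by
      rw [← rpow_add htpos, sub_add_cancel, rpow_two]; ring
    have : |t| ^ 3 ≤ δ ^ (2 - q) * |t| ^ q := by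
      rw [hsplit]
      calc |t| * (|t| ^ (2 - q) * |t| ^ q) ≤ 1 * (δ ^ (2 - q) * |t| ^ q) := by
            refine mul_le_mul ht ?_ (by positivity) zero_le_one
            exact mul_le_mul_of_nonneg_right (rpow_le_rpow_of_nonpos hδ hδt.le (by linarith))
              (by positivity)
        _ = δ ^ (2 - q) * |t| ^ q := one_mul _
    have : 0 ≤ δ * t ^ 2 := by positivity
    linarith

theorem exists_abs_powTaylorRemainder_le {q : ℝ} (hq : 2 ≤ q) :
    ∃ C, 0 < C ∧ ∀ δ, 0 < δ → δ ≤ 1 → ∀ t,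
      |powTaylorRemainder q t| ≤ C * (δ * t ^ 2 + δ ^ (2 - q) * |t| ^ q) := by
  obtain ⟨L, hL0, hL⟩ := exists_abs_powTaylorRemainder_le_mul_abs_pow_three q
  set A := (2 ^ q + 1 + q + q * (q - 1) / 2) * 2 ^ q
  have hA : 0 < A := by
    have : 0 ≤ q * (q - 1) / 2 := by nlinarith
    positivity
  refine ⟨L + A, by linarith, fun δ hδ hδ1 t => ?_⟩
  have hB : 0 ≤ δ * t ^ 2 + δ ^ (2 - q) * |t| ^ q := by positivity
  rcases le_total |t| (1 / 2) with hsmall | hlarge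
  · calc |powTaylorRemainder q t| ≤ L * |t| ^ 3 := hL t hsmall
      _ ≤ L * (δ * t ^ 2 + δ ^ (2 - q) * |t| ^ q) :=
          mul_le_mul_of_nonneg_left (abs_pow_three_le_mul_sq_add_rpow hq hδ (by linarith)) hL0
      _ ≤ (L + A) * (δ * t ^ 2 + δ ^ (2 - q) * |t| ^ q) :=
          mul_le_mul_of_nonneg_right (by linarith) hB
  · have hδq : 1 ≤ δ ^ (2 - q) := one_le_rpow_of_pos_of_le_one_of_nonpos hδ hδ1 (by linarith)
    calc |powTaylorRemainder q t| ≤ A * |t| ^ q :=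
          abs_powTaylorRemainder_le_of_half_le_abs hq hlarge
      _ ≤ A * (δ * t ^ 2 + δ ^ (2 - q) * |t| ^ q) := by
          refine mul_le_mul_of_nonneg_left ?_ hA.le
          nlinarith [sq_nonneg t, rpow_nonneg (abs_nonneg t) q]
      _ ≤ (L + A) * (δ * t ^ 2 + δ ^ (2 - q) * |t| ^ q) :=
          mul_le_mul_of_nonneg_right (by linarith) hB

theorem continuous_powTaylorRemainder {q : ℝ} (hq : 0 ≤ q) : Continuous (powTaylorRemainder q) := by
  unfold powTaylorRemainder
  fun_prop (disch := exact fun _ => Or.inr hq)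

namespace MeasureTheory

variable {α : Type*} [MeasurableSpace α] {μ : Measure α}

theorem MemLp.integral_norm_rpow_eq_toReal_eLpNorm_rpow {E : Type*} [NormedAddCommGroup E]
    {f : α → E} {p : ENNReal} (hf : MemLp f p μ) (hp0 : p ≠ 0) (hp : p ≠ ⊤) :
    ∫ x, ‖f x‖ ^ p.toReal ∂μ = (eLpNorm f p μ).toReal ^ p.toReal := by
  have hint : 0 ≤ ∫ x, ‖f x‖ ^ p.toReal ∂μ := integral_nonneg fun x => by positivity
  rw [hf.eLpNorm_eq_integral_rpow_norm hp0 hp, ENNReal.toReal_ofReal (by positivity),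
    rpow_inv_rpow hint (ENNReal.toReal_ne_zero.mpr ⟨hp0, hp⟩)]

theorem MemLp.integral_sq_eq_toReal_eLpNorm_sq {f : α → ℝ} (hf : MemLp f 2 μ) :
    ∫ x, f x ^ 2 ∂μ = (eLpNorm f 2 μ).toReal ^ 2 := by
  simpa [rpow_two] using
    hf.integral_norm_rpow_eq_toReal_eLpNorm_rpow two_ne_zero ENNReal.ofNat_ne_top

theorem MemLp.integral_abs_rpow_eq_toReal_eLpNorm_rpow {f : α → ℝ} {q : ℝ} (hq : 0 < q)
    (hf : MemLp f (ENNReal.ofReal q) μ) :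
    ∫ x, |f x| ^ q ∂μ = (eLpNorm f (ENNReal.ofReal q) μ).toReal ^ q := by
  simpa [ENNReal.toReal_ofReal hq.le] using
    hf.integral_norm_rpow_eq_toReal_eLpNorm_rpow (by simpa using hq) ENNReal.ofReal_ne_top

theorem integrable_and_abs_integral_le_of_abs_le {f φ : α → ℝ} {q C a b : ℝ} (hq : 0 < q)
    (hφ2 : MemLp φ 2 μ) (hφq : MemLp φ (ENNReal.ofReal q) μ) (hf : AEStronglyMeasurable f μ)
    (hfφ : ∀ x, |f x| ≤ C * (a * φ x ^ 2 + b * |φ x| ^ q)) :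
    Integrable f μ ∧ |∫ x, f x ∂μ| ≤
      C * (a * (eLpNorm φ 2 μ).toReal ^ 2 + b * (eLpNorm φ (ENNReal.ofReal q) μ).toReal ^ q) := by
  have hsq : Integrable (fun x => φ x ^ 2) μ := hφ2.integrable_sq
  have hrpow : Integrable (fun x => |φ x| ^ q) μ := by
    simpa [ENNReal.toReal_ofReal hq.le] using
      hφq.integrable_norm_rpow (by simpa using hq) ENNReal.ofReal_ne_top
  have hg : Integrable (fun x => C * (a * φ x ^ 2 + b * |φ x| ^ q)) μ :=
    ((hsq.const_mul a).add (hrpow.const_mul b)).const_mul C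
  refine ⟨hg.mono' hf (.of_forall hfφ), ?_⟩
  calc |∫ x, f x ∂μ| ≤ ∫ x, C * (a * φ x ^ 2 + b * |φ x| ^ q) ∂μ :=
        norm_integral_le_of_norm_le (f := f) hg (.of_forall hfφ)
    _ = C * (a * (eLpNorm φ 2 μ).toReal ^ 2 + b * (eLpNorm φ (ENNReal.ofReal q) μ).toReal ^ q) := by
        rw [integral_const_mul, integral_add (hsq.const_mul a) (hrpow.const_mul b),
          integral_const_mul, integral_const_mul, hφ2.integral_sq_eq_toReal_eLpNorm_sq,
          hφq.integral_abs_rpow_eq_toReal_eLpNorm_rpow hq]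

end MeasureTheory

theorem integral_truncated_taylor_estimate (q : ℝ) (hq : 2 < q) :
    ∃ C : ℝ, 0 < C ∧ ∀ (X : Type) (_ : MeasurableSpace X) (μ : Measure X) (δ : ℝ),
      0 < δ → δ ≤ 1 → ∀ φ : X → ℝ, MemLp φ 2 μ → MemLp φ (ENNReal.ofReal q) μ →
      Integrable (fun x => |1 + φ x| ^ q - 1 - q * φ x - q * (q - 1) / 2 * φ x ^ 2) μ ∧
      |∫ x, (|1 + φ x| ^ q - 1 - q * φ x - q * (q - 1) / 2 * φ x ^ 2) ∂μ| ≤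
        C * (δ * (eLpNorm φ 2 μ).toReal ^ 2 +
          δ ^ (2 - q) * (eLpNorm φ (ENNReal.ofReal q) μ).toReal ^ q) := by
  obtain ⟨C, hC, hR⟩ := exists_abs_powTaylorRemainder_le hq.le
  refine ⟨C, hC, fun X _ μ δ hδ hδ1 φ hφ2 hφq => ?_⟩
  exact integrable_and_abs_integral_le_of_abs_le (by linarith) hφ2 hφq
    ((continuous_powTaylorRemainder (by linarith)).comp_aestronglyMeasurable
      hφ2.aestronglyMeasurable) (fun x => hR δ hδ hδ1 (φ x))
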